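/- Let K be a left alternative, weakly right distributive k-algebra with conjugation whose trace and norm are k-valued. Then the norm respects squares: n(a²) = n(a)² for all a ∈ K. -/

import Mathlib

/-- A `k`-algebra with conjugation: a left `k`-vector space `K` with a
(not necessarily distributive or associative) multiplication and identity,
where `k` sits centrally (encoded via scalar compatibility), together with a
self-inverse `k`-linear conjugation fixing `k`. -/
structure ConjAlg (k : Type*) [Field k] (K : Type*) [AddCommGroup K] [Module k K] where
  mul : K → K → K
  one : K
  one_mul : ∀ x, mul one x = x
  mul_one : ∀ x, mul x one = x
  smul_mul : ∀ (c : k) (x y : K), mul (c • x) y = c • mul x y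
  mul_smul : ∀ (c : k) (x y : K), mul x (c • y) = c • mul x y
  conj : K →ₗ[k] K
  conj_conj : ∀ x, conj (conj x) = x
  conj_one : conj one = one

namespace ConjAlg

variable {k : Type*} [Field k] {K : Type*} [AddCommGroup K] [Module k K]

/-- The norm `n(a) = ā a`. -/
def n (A : ConjAlg k K) (x : K) : K := A.mul (A.conj x) x

/-- The trace `t(a) = a + ā`. -/
def t (A : ConjAlg k K) (x : K) : K := x + A.conj x

/-- Membership in (the copy of) `k` inside `K`. -/
def InK (A : ConjAlg k K) (x : K) : Prop := ∃ c : k, x = c • A.one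

/-- Weak right distributivity: `(a+b)c = ac + bc` whenever `a ∈ k`. -/
def WeakRightDistrib (A : ConjAlg k K) : Prop :=
  ∀ (c : k) (b y : K), A.mul (c • A.one + b) y = A.mul (c • A.one) y + A.mul b y

/-- Weak left distributivity: `c(a+b) = ca + cb` whenever `a ∈ k`. -/
def WeakLeftDistrib (A : ConjAlg k K) : Prop :=
  ∀ (c : k) (b y : K), A.mul y (c • A.one + b) = A.mul y (c • A.one) + A.mul y b

/-- Full left distributivity. -/
def LeftDistrib (A : ConjAlg k K) : Prop :=
  ∀ x y z : K, A.mul x (y + z) = A.mul x y + A.mul x z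

/-- Full right distributivity. -/
def RightDistrib (A : ConjAlg k K) : Prop :=
  ∀ x y z : K, A.mul (x + y) z = A.mul x z + A.mul y z

/-- Left alternativity: `a(ab) = a²b`. -/
def LeftAlt (A : ConjAlg k K) : Prop :=
  ∀ a b : K, A.mul a (A.mul a b) = A.mul (A.mul a a) b

/-- The trace is `k`-valued. -/
def TraceKValued (A : ConjAlg k K) : Prop := ∀ x : K, A.InK (A.t x)

/-- The norm is `k`-valued. -/
def NormKValued (A : ConjAlg k K) : Prop := ∀ x : K, A.InK (A.n x)

/-- The norm is anisotropic. -/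
def Anisotropic (A : ConjAlg k K) : Prop := ∀ x : K, x ≠ 0 → A.n x ≠ 0

/-- The norm is symmetric: `n(ā) = n(a)`. -/
def NormSymmetric (A : ConjAlg k K) : Prop := ∀ x : K, A.n (A.conj x) = A.n x

end ConjAlg

/-! Since `t(a)` and `n(a)` lie in `k`, we have `ā = t(a) - a`, and weak right distributivity turns
`n(a) = ā a` into the quadratic relation `a² = t(a) a - n(a)`. Left alternativity gives
`a · a² = a² · a`, hence `ā a² = n(a) a`; conjugating the quadratic relation and multiplying by `a²`
then yields `n(a²) = n(a)²`. -/

namespace ConjAlg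

variable {k : Type*} [Field k] {K : Type*} [AddCommGroup K] [Module k K] {A : ConjAlg k K}

theorem smul_one_mul (A : ConjAlg k K) (c : k) (y : K) : A.mul (c • A.one) y = c • y := by
  rw [A.smul_mul, A.one_mul]

theorem neg_mul (A : ConjAlg k K) (x y : K) : A.mul (-x) y = -A.mul x y := by
  rw [← neg_one_smul k x, A.smul_mul, neg_one_smul]

theorem WeakRightDistrib.smul_one_add_mul (h : A.WeakRightDistrib) (c : k) (b y : K) :
    A.mul (c • A.one + b) y = c • y + A.mul b y := by
  rw [h, smul_one_mul]

theorem WeakRightDistrib.smul_one_sub_mul (h : A.WeakRightDistrib) (c : k) (b y : K) :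
    A.mul (c • A.one - b) y = c • y - A.mul b y := by
  rw [sub_eq_add_neg, h.smul_one_add_mul, neg_mul, ← sub_eq_add_neg]

section

variable {a : K} {τ ν : k}

theorem conj_eq_of_t_eq (hτ : A.t a = τ • A.one) : A.conj a = τ • A.one - a :=
  eq_sub_of_add_eq' hτ

theorem WeakRightDistrib.mul_self_eq (hwr : A.WeakRightDistrib) (hτ : A.t a = τ • A.one)
    (hν : A.n a = ν • A.one) : A.mul a a = τ • a - ν • A.one := by
  rw [← hν, n, conj_eq_of_t_eq hτ, hwr.smul_one_sub_mul]
  abel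

theorem WeakRightDistrib.mul_self_mul_eq (hwr : A.WeakRightDistrib) (hτ : A.t a = τ • A.one)
    (hν : A.n a = ν • A.one) : A.mul (A.mul a a) a = τ • A.mul a a - ν • a := by
  have hsq : A.mul a a = (-ν) • A.one + τ • a := by rw [hwr.mul_self_eq hτ hν]; module
  nth_rewrite 1 [hsq]
  rw [hwr.smul_one_add_mul, A.smul_mul]
  module

theorem conj_mul_mul_self_eq (hla : A.LeftAlt) (hwr : A.WeakRightDistrib)
    (hτ : A.t a = τ • A.one) (hν : A.n a = ν • A.one) :
    A.mul (A.conj a) (A.mul a a) = ν • a := by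
  rw [conj_eq_of_t_eq hτ, hwr.smul_one_sub_mul, hla, hwr.mul_self_mul_eq hτ hν]
  abel

theorem conj_mul_self_eq (hwr : A.WeakRightDistrib) (hτ : A.t a = τ • A.one)
    (hν : A.n a = ν • A.one) : A.conj (A.mul a a) = (-ν) • A.one + τ • A.conj a := by
  rw [hwr.mul_self_eq hτ hν, map_sub, map_smul, map_smul, A.conj_one]
  module

end

end ConjAlg

theorem stmt6 {k : Type*} [Field k] {K : Type*} [AddCommGroup K] [Module k K] (A : ConjAlg k K)
    (hla : A.LeftAlt) (hwr : A.WeakRightDistrib)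
    (ht : A.TraceKValued) (hn : A.NormKValued) :
    ∀ a : K, A.n (A.mul a a) = A.mul (A.n a) (A.n a) := by
  intro a
  obtain ⟨τ, hτ⟩ := ht a
  obtain ⟨ν, hν⟩ := hn a
  calc A.n (A.mul a a)
      = (-ν) • A.mul a a + τ • A.mul (A.conj a) (A.mul a a) := by
        rw [ConjAlg.n, ConjAlg.conj_mul_self_eq hwr hτ hν, hwr.smul_one_add_mul, A.smul_mul]
    _ = (-ν) • (τ • a - ν • A.one) + τ • ν • a := by
        rw [ConjAlg.conj_mul_mul_self_eq hla hwr hτ hν, hwr.mul_self_eq hτ hν]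
    _ = ν • ν • A.one := by module
    _ = A.mul (A.n a) (A.n a) := by rw [hν, A.smul_one_mul]
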